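/- arXiv:2009.14322 — 3 statements merged into one kernel-verified Lean document; each statement's English description precedes it below -/
import Mathlib

section
/- The iteration operator of the maybe monad satisfies the fixpoint law: for every f : X → (Y ⊎ X) ⊎ {⊥}, f† = [[inl, f†], inr] ∘ f, where f†(x₀) is defined by following the longest sequence x₀, x₁, … with f(xᵢ) = inl(inr xᵢ₊₁), returning inr ⊥ if this sequence is infinite or reaches f(xᵢ) = inr ⊥, and inl y if it terminates with f(xₙ) = inl(inl y). -/
/-! A chain that stops with a result can never be extended further, so the result is unique and
`mIter f x` is that result. The fixpoint law is then a one-step unfolding: if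
`f x = inl (inr x')` the chain from `x` is `x` followed by the chain from `x'`, and otherwise it
ends at `x`. -/

attribute [local instance] Classical.propDecidable

/-- Kleisli lifting of the maybe monad `M X = X ⊎ {⊥}`. -/
def mBind {X Y : Type} (f : X → Y ⊕ Unit) : X ⊕ Unit → Y ⊕ Unit :=
  Sum.elim f Sum.inr

/-- The chain `x₀, x₁, …` followed by iteration: `mChain f n x` is the `n`-th
element of the sequence determined by `f xᵢ = inl (inr xᵢ₊₁)`, if it exists. -/
def mChain {X Y : Type} (f : X → (Y ⊕ X) ⊕ Unit) : ℕ → X → Option X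
  | 0, x => some x
  | n + 1, x =>
    match mChain f n x with
    | some x' =>
      match f x' with
      | Sum.inl (Sum.inr x'') => some x''
      | _ => none
    | none => none

/-- Iteration of the maybe monad: follow the longest sequence
`x₀, x₁, …` with `f xᵢ = inl (inr xᵢ₊₁)`; return `inr ⊥` if it is infinite
or reaches `inr ⊥`, and `inl y` if it terminates with `f xₙ = inl (inl y)`. -/
noncomputable def mIter {X Y : Type} (f : X → (Y ⊕ X) ⊕ Unit) (x : X) : Y ⊕ Unit :=
  if h : ∃ n, ∃ x', ∃ y, mChain f n x = some x' ∧ f x' = Sum.inl (Sum.inl y) then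
    Sum.inl h.choose_spec.choose_spec.choose
  else Sum.inr ()

namespace MaybeIter

variable {X Y : Type} (f : X → (Y ⊕ X) ⊕ Unit)

def StopsAt (x : X) (n : ℕ) (y : Y) : Prop :=
  ∃ a, mChain f n x = some a ∧ f a = Sum.inl (Sum.inl y)

variable {f}

theorem mChain_eq_none_of_le {n m : ℕ} {x : X} (h : mChain f n x = none) (hnm : n ≤ m) :
    mChain f m x = none := by
  induction hnm with
  | refl => exact h
  | step _ ih => simp [mChain, ih]

theorem mChain_succ_of_eq_inl_inr {x x' : X} (hf : f x = Sum.inl (Sum.inr x')) (n : ℕ) :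
    mChain f (n + 1) x = mChain f n x' := by
  induction n with
  | zero => simp [mChain, hf]
  | succ n ih => rw [mChain, ih]; rfl

theorem stopsAt_zero_iff {x : X} {y : Y} : StopsAt f x 0 y ↔ f x = Sum.inl (Sum.inl y) := by
  simp [StopsAt, mChain]

theorem stopsAt_succ_iff_of_eq_inl_inr {x x' : X} (hf : f x = Sum.inl (Sum.inr x')) {n : ℕ}
    {y : Y} : StopsAt f x (n + 1) y ↔ StopsAt f x' n y := by
  rw [StopsAt, StopsAt, mChain_succ_of_eq_inl_inr hf]

theorem StopsAt.mChain_eq_none {x : X} {n m : ℕ} {y : Y} (h : StopsAt f x n y) (hnm : n < m) :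
    mChain f m x = none := by
  obtain ⟨a, ha, hfa⟩ := h
  exact mChain_eq_none_of_le (by simp [mChain, ha, hfa]) hnm

theorem not_stopsAt_succ_of_eq_inr {x : X} (hf : f x = Sum.inr ()) (n : ℕ) (y : Y) :
    ¬ StopsAt f x (n + 1) y := by
  rintro ⟨a, ha, -⟩
  rw [mChain_eq_none_of_le (by simp [mChain, hf]) (Nat.le_add_left 1 n)] at ha
  simp at ha

theorem StopsAt.unique {x : X} {n m : ℕ} {y y' : Y} (h : StopsAt f x n y)
    (h' : StopsAt f x m y') : y = y' := by
  obtain ⟨a, ha, hfa⟩ := h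
  obtain ⟨b, hb, hfb⟩ := h'
  obtain rfl : n = m := by
    by_contra hne
    rcases Nat.lt_or_gt_of_ne hne with hlt | hlt
    · simp [StopsAt.mChain_eq_none ⟨a, ha, hfa⟩ hlt] at hb
    · simp [StopsAt.mChain_eq_none ⟨b, hb, hfb⟩ hlt] at ha
  obtain rfl : a = b := Option.some.inj (ha.symm.trans hb)
  simpa [hfa] using hfb

theorem mIter_eq_inl {x : X} {n : ℕ} {y : Y} (h : StopsAt f x n y) : mIter f x = Sum.inl y := by
  have hex : ∃ n, ∃ x', ∃ y, mChain f n x = some x' ∧ f x' = Sum.inl (Sum.inl y) :=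
    ⟨n, h.choose, y, h.choose_spec⟩
  rw [mIter, dif_pos hex]
  exact congrArg Sum.inl (StopsAt.unique ⟨_, hex.choose_spec.choose_spec.choose_spec⟩ h)

theorem mIter_eq_inr {x : X} (h : ∀ n y, ¬ StopsAt f x n y) : mIter f x = Sum.inr () := by
  rw [mIter, dif_neg]
  rintro ⟨n, a, y, hs⟩
  exact h n y ⟨a, hs⟩

end MaybeIter

open MaybeIter in
/-- The iteration operator of the maybe monad satisfies the fixpoint law
`f† = [[inl, f†], inr] ∘ f`. -/
theorem maybe_iter_fixpoint {X Y : Type} (f : X → (Y ⊕ X) ⊕ Unit) :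
    mIter f = Sum.elim (Sum.elim Sum.inl (mIter f)) Sum.inr ∘ f := by
  funext x
  rw [Function.comp_apply]
  rcases hf : f x with (y | x') | ⟨⟩
  · exact mIter_eq_inl (stopsAt_zero_iff.2 hf)
  · show mIter f x = mIter f x'
    by_cases hx' : ∃ n y, StopsAt f x' n y
    · obtain ⟨n, y, h⟩ := hx'
      rw [mIter_eq_inl h, mIter_eq_inl ((stopsAt_succ_iff_of_eq_inl_inr hf).2 h)]
    · push Not at hx'
      rw [mIter_eq_inr hx', mIter_eq_inr]
      rintro (_ | n) y h
      · simp [stopsAt_zero_iff, hf] at h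
      · exact hx' n y ((stopsAt_succ_iff_of_eq_inl_inr hf).1 h)
  · refine mIter_eq_inr ?_
    rintro (_ | n) y h
    · simp [stopsAt_zero_iff, hf] at h
    · exact not_stopsAt_succ_of_eq_inr hf n y h
end

section
/- Iteration in the maybe monad satisfies the codiagonal law: for every g : X → ((Y ⊎ X) ⊎ X) ⊎ {⊥}, (g†)† = (([id, inr] ⊎ id_{{⊥}}) ∘ g)†, where [id, inr] : (Y ⊎ X) ⊎ X → Y ⊎ X merges the two X-summands and ⊥ is left unchanged. -/
attribute [local instance] Classical.propDecidable

section Aux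

variable {X Y : Type}

lemma mChain_succ_of_step (f : X → (Y ⊕ X) ⊕ Unit) {n : ℕ} {x x' x'' : X}
    (h1 : mChain f n x = some x') (h2 : f x' = Sum.inl (Sum.inr x'')) :
    mChain f (n + 1) x = some x'' := by
  simp [mChain, h1, h2]

lemma mChain_succ_of_term (f : X → (Y ⊕ X) ⊕ Unit) {n : ℕ} {x x' : X} {z : Y}
    (h1 : mChain f n x = some x') (h2 : f x' = Sum.inl (Sum.inl z)) :
    mChain f (n + 1) x = none := by
  simp [mChain, h1, h2]

lemma mChain_none_add (f : X → (Y ⊕ X) ⊕ Unit) {n : ℕ} {x : X}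
    (h : mChain f n x = none) : ∀ k, mChain f (n + k) x = none := by
  intro k
  induction k with
  | zero => exact h
  | succ k ih => simp [mChain, ih]

lemma mChain_succ_some {f : X → (Y ⊕ X) ⊕ Unit} {n : ℕ} {x x'' : X}
    (h : mChain f (n + 1) x = some x'') :
    ∃ x', mChain f n x = some x' ∧ f x' = Sum.inl (Sum.inr x'') := by
  rcases hc : mChain f n x with _ | x'
  · simp [mChain, hc] at h
  · rcases hf : f x' with ((y | w) | u)
    · simp [mChain, hc, hf] at h
    · refine ⟨x', rfl, ?_⟩
      simp only [mChain, hc, hf] at h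
      simp only [Option.some.injEq] at h
      rw [hf, h]
    · simp [mChain, hc, hf] at h

lemma mChain_term_unique {f : X → (Y ⊕ X) ⊕ Unit} {x : X} {n m : ℕ} {x' x'' : X} {z z' : Y}
    (h1 : mChain f n x = some x') (h2 : f x' = Sum.inl (Sum.inl z))
    (h3 : mChain f m x = some x'') (h4 : f x'' = Sum.inl (Sum.inl z')) :
    z = z' := by
  have key : ∀ {a b : ℕ} {u : X} {w : Y}, a < b → mChain f a x = some u →
      f u = Sum.inl (Sum.inl w) → mChain f b x = none := by
    intro a b u w hab ha hf
    obtain ⟨k, rfl⟩ := Nat.exists_eq_add_of_lt hab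
    have : a + k + 1 = (a + 1) + k := by omega
    rw [this]
    exact mChain_none_add f (mChain_succ_of_term f ha hf) k
  rcases Nat.lt_trichotomy n m with h | h | h
  · rw [key h h1 h2] at h3; cases h3
  · subst h
    rw [h1] at h3
    injection h3 with h3
    subst h3
    rw [h2] at h4
    injection h4 with h4
    injection h4 with h4
  · rw [key h h3 h4] at h1; cases h1

lemma mIter_eq_inl_iff (f : X → (Y ⊕ X) ⊕ Unit) (x : X) (y : Y) :
    mIter f x = Sum.inl y ↔
      ∃ n x', mChain f n x = some x' ∧ f x' = Sum.inl (Sum.inl y) := by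
  unfold mIter
  split
  · next h =>
    obtain ⟨hn1, hn2⟩ := h.choose_spec.choose_spec.choose_spec
    constructor
    · intro he
      injection he with he
      subst he
      exact ⟨_, _, hn1, hn2⟩
    · rintro ⟨n, x', h1, h2⟩
      have := mChain_term_unique h1 h2 hn1 hn2
      rw [this]
  · next h =>
    constructor
    · intro he; cases he
    · rintro ⟨n, x', h1, h2⟩
      exact absurd ⟨n, x', y, h1, h2⟩ h

end Aux

section Codiag

variable {X Y : Type} (g : X → ((Y ⊕ X) ⊕ X) ⊕ Unit)

lemma hmap_step {x x' : X} (h : g x = Sum.inl (Sum.inr x')) :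
    (Sum.map (Sum.elim id Sum.inr) id ∘ g) x = Sum.inl (Sum.inr x') := by
  simp [Function.comp, h]

lemma hmap_step' {x x' : X} (h : g x = Sum.inl (Sum.inl (Sum.inr x'))) :
    (Sum.map (Sum.elim id Sum.inr) id ∘ g) x = Sum.inl (Sum.inr x') := by
  simp [Function.comp, h]

lemma hmap_term {x : X} {y : Y} (h : g x = Sum.inl (Sum.inl (Sum.inl y))) :
    (Sum.map (Sum.elim id Sum.inr) id ∘ g) x = Sum.inl (Sum.inl y) := by
  simp [Function.comp, h]

lemma gchain_to_hchain {k j : ℕ} {x u v : X}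
    (hk : mChain (Sum.map (Sum.elim id Sum.inr) id ∘ g) k x = some u)
    (hj : mChain g j u = some v) :
    mChain (Sum.map (Sum.elim id Sum.inr) id ∘ g) (k + j) x = some v := by
  induction j generalizing v with
  | zero =>
    simp only [mChain, Option.some.injEq] at hj
    subst hj
    exact hk
  | succ j ih =>
    obtain ⟨v', h1, h2⟩ := mChain_succ_some hj
    have := ih h1
    exact mChain_succ_of_step _ this (hmap_step g h2)

lemma iterchain_to_hchain {m : ℕ} {x u : X}
    (hm : mChain (mIter g) m x = some u) :
    ∃ k, mChain (Sum.map (Sum.elim id Sum.inr) id ∘ g) k x = some u := by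
  induction m generalizing u with
  | zero =>
    simp only [mChain, Option.some.injEq] at hm
    exact ⟨0, by rw [← hm]; rfl⟩
  | succ m ih =>
    obtain ⟨u', h1, h2⟩ := mChain_succ_some hm
    obtain ⟨k, hk⟩ := ih h1
    obtain ⟨j, v, hv, hgv⟩ := (mIter_eq_inl_iff g u' (Sum.inr u)).mp h2
    have hk2 := gchain_to_hchain g hk hv
    exact ⟨k + j + 1, mChain_succ_of_step _ hk2 (hmap_step' g hgv)⟩

lemma hchain_decomp {k : ℕ} {x v : X}
    (hk : mChain (Sum.map (Sum.elim id Sum.inr) id ∘ g) k x = some v) :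
    ∃ m u j, mChain (mIter g) m x = some u ∧ mChain g j u = some v := by
  induction k generalizing v with
  | zero =>
    simp only [mChain, Option.some.injEq] at hk
    exact ⟨0, x, 0, rfl, by rw [hk]; rfl⟩
  | succ k ih =>
    obtain ⟨v', h1, h2⟩ := mChain_succ_some hk
    obtain ⟨m, u, j, hm, hj⟩ := ih h1
    rcases hgv : g v' with (((y | w) | w) | t)
    · rw [hmap_term g hgv] at h2; cases h2
    · rw [hmap_step' g hgv] at h2
      injection h2 with h2
      injection h2 with h2
      subst h2
      have hiter : mIter g u = Sum.inl (Sum.inr w) :=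
        (mIter_eq_inl_iff g u (Sum.inr w)).mpr ⟨j, v', hj, hgv⟩
      exact ⟨m + 1, w, 0, mChain_succ_of_step _ hm hiter, rfl⟩
    · rw [hmap_step g hgv] at h2
      injection h2 with h2
      injection h2 with h2
      subst h2
      exact ⟨m, u, j + 1, hm, mChain_succ_of_step g hj hgv⟩
    · simp [Function.comp, hgv] at h2

end Codiag

/-- Codiagonal law for iteration in the maybe monad:
`(g†)† = (M [id, inr] ∘ g)†`, where the outer `X`-summand is iterated first
and `[id, inr] : (Y ⊎ X) ⊎ X → Y ⊎ X` merges the two `X`-summands. -/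
theorem maybe_iter_codiagonal {X Y : Type}
    (g : X → ((Y ⊕ X) ⊕ X) ⊕ Unit) :
    mIter (mIter g) = mIter (Sum.map (Sum.elim id Sum.inr) id ∘ g) := by
  funext x
  rcases hL : mIter (mIter g) x with y | u
  · obtain ⟨m, u, hm, hu⟩ := (mIter_eq_inl_iff (mIter g) x y).mp hL
    obtain ⟨j, v, hv, hgv⟩ := (mIter_eq_inl_iff g u (Sum.inl y)).mp hu
    obtain ⟨k, hk⟩ := iterchain_to_hchain g hm
    have hk2 := gchain_to_hchain g hk hv
    exact ((mIter_eq_inl_iff _ x y).mpr ⟨k + j, v, hk2, hmap_term g hgv⟩).symm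
  · cases u
    rcases hR : mIter (Sum.map (Sum.elim id Sum.inr) id ∘ g) x with y | t
    · exfalso
      obtain ⟨k, v, hk, hv⟩ := (mIter_eq_inl_iff _ x y).mp hR
      have hgv : g v = Sum.inl (Sum.inl (Sum.inl y)) := by
        rcases hg : g v with (((y' | w) | w) | t)
        · rw [hmap_term g hg] at hv
          injection hv with hv
          injection hv with hv
          rw [hv]
        · rw [hmap_step' g hg] at hv; simp_all
        · rw [hmap_step g hg] at hv; simp_all
        · simp [Function.comp, hg] at hv
      obtain ⟨m, u, j, hm, hj⟩ := hchain_decomp g hk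
      have : mIter (mIter g) x = Sum.inl y :=
        (mIter_eq_inl_iff _ x y).mpr
          ⟨m, u, hm, (mIter_eq_inl_iff g u (Sum.inl y)).mpr ⟨j, v, hj, hgv⟩⟩
      rw [hL] at this
      cases this
    · cases t; rfl
end

section
/- The map ι : H_S X → X ⊎ (S ⊎ {⊥}) is a monad morphism from H_S to the exception monad (−) ⊎ (S ⊎ {⊥}): besides ι ∘ η = inl, for every f : X → H_S Y we have ι ∘ f⋆ = [ι ∘ f, inr] ∘ ι, where f⋆ is the Kleisli lifting of H_S (concatenation of trajectories, with divergence absorbing). -/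
/-! `ι` only observes how a computation starts: the first state of a nonempty trajectory, and
otherwise the return value (or `⊥` for the empty divergent run). On a terminating input `f⋆`
prepends the input's trajectory `m` to `f x`; if `m` is nonempty this fixes the observation
to `m(0)`, as on the right-hand side, and if `m` is empty it changes nothing, so both sides
are `ι (f x)`. A divergent input is returned unchanged by `f⋆` and sent to `inr` by `ι`. -/

noncomputable section

/-- Finite open trajectories over `S`: domain `[0, d)` with `d : ℝ≥0`. -/
def FTrj (S : Type) : Type := Σ d : NNReal, ({t : NNReal // t < d} → S)

/-- Closed trajectories over `S`: domain `[0, d]` with `d : ℝ≥0`. -/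
def CTrj (S : Type) : Type := Σ d : NNReal, ({t : NNReal // t ≤ d} → S)

/-- Open trajectories over `S`: domain `[0, d)` with `d : [0,∞]`. -/
def OTrj (S : Type) : Type := Σ d : ENNReal, ({t : NNReal // (t : ENNReal) < d} → S)

/-- Divergent trajectories: closed-divergent or open-divergent. -/
def DTrj (S : Type) : Type := CTrj S ⊕ OTrj S

/-- The monad `H_S X = (Σ_{I ∈ [0,ℝ≥0)} S^I × X) ⊎ (Σ_{I ∈ [0,∞]-downsets} S^I)`. -/
def HS (S X : Type) : Type := (FTrj S × X) ⊕ DTrj S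

/-- The empty finite open trajectory. -/
def FTrj.eps (S : Type) : FTrj S :=
  ⟨0, fun t => absurd t.2 (by exact not_lt.mpr zero_le)⟩

/-- Unit of `H_S`: the empty trajectory paired with the return value. -/
def HS.eta {S X : Type} (x : X) : HS S X := Sum.inl (FTrj.eps S, x)

/-- The map `ι : H_S X → X ⊎ (S ⊎ {⊥})`. -/
def HS.iota {S X : Type} : HS S X → X ⊕ (S ⊕ Unit)
  | Sum.inl (⟨d, e⟩, x) =>
      if h : 0 < d then Sum.inr (Sum.inl (e ⟨0, h⟩)) else Sum.inl x
  | Sum.inr (Sum.inl ⟨d, e⟩) => Sum.inr (Sum.inl (e ⟨0, (zero_le : (0 : NNReal) ≤ d)⟩))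
  | Sum.inr (Sum.inr ⟨d, e⟩) =>
      if h : 0 < d then Sum.inr (Sum.inl (e ⟨0, by simpa using h⟩))
      else Sum.inr (Sum.inr ())

/-- Concatenation of finite open trajectories. -/
def FTrj.concat {S : Type} (p q : FTrj S) : FTrj S :=
  ⟨p.1 + q.1, fun t =>
    if h : t.1 < p.1 then p.2 ⟨t.1, h⟩
    else q.2 ⟨t.1 - p.1, (tsub_lt_iff_left (not_lt.mp h)).mpr t.2⟩⟩

/-- Action of a finite open trajectory on a closed trajectory. -/
def FTrj.actC {S : Type} (p : FTrj S) (q : CTrj S) : CTrj S :=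
  ⟨p.1 + q.1, fun t =>
    if h : t.1 < p.1 then p.2 ⟨t.1, h⟩
    else q.2 ⟨t.1 - p.1, tsub_le_iff_left.mpr t.2⟩⟩

/-- Action of a finite open trajectory on an open trajectory. -/
def FTrj.actO {S : Type} (p : FTrj S) (q : OTrj S) : OTrj S :=
  ⟨(p.1 : ENNReal) + q.1, fun t =>
    if h : t.1 < p.1 then p.2 ⟨t.1, h⟩
    else q.2 ⟨t.1 - p.1, by
      have h2 := t.2
      rw [ENNReal.coe_sub]
      exact (ENNReal.sub_lt_iff_lt_right ENNReal.coe_ne_top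
        (by exact_mod_cast not_lt.mp h)).mpr
        (h2.trans_le (add_comm ((p.1 : ENNReal)) q.1).le)⟩⟩

/-- Action of a finite open trajectory on a divergent trajectory. -/
def FTrj.actD {S : Type} (p : FTrj S) : DTrj S → DTrj S
  | Sum.inl c => Sum.inl (p.actC c)
  | Sum.inr o => Sum.inr (p.actO o)

/-- Kleisli lifting of `H_S`: trajectory concatenation, divergence absorbing. -/
def HS.bind {S X Y : Type} (f : X → HS S Y) : HS S X → HS S Y
  | Sum.inl (m, x) =>
    match f x with
    | Sum.inl (n, y) => Sum.inl (m.concat n, y)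
    | Sum.inr e => Sum.inr (m.actD e)
  | Sum.inr e => Sum.inr e

def FTrj.prepend {S Y : Type} (m : FTrj S) : HS S Y → HS S Y
  | Sum.inl (n, y) => Sum.inl (m.concat n, y)
  | Sum.inr e => Sum.inr (m.actD e)

def DTrj.head {S : Type} : DTrj S → S ⊕ Unit
  | Sum.inl ⟨_, e⟩ => Sum.inl (e ⟨0, zero_le⟩)
  | Sum.inr ⟨d, e⟩ => if h : 0 < d then Sum.inl (e ⟨0, by simpa using h⟩) else Sum.inr ()

namespace HS

variable {S X Y : Type}

theorem bind_inl (f : X → HS S Y) (m : FTrj S) (x : X) :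
    bind f (Sum.inl (m, x)) = m.prepend (f x) :=
  rfl

theorem iota_eta (x : X) : iota (eta (S := S) x) = Sum.inl x := by
  simp [iota, eta, FTrj.eps]

theorem iota_inl_of_pos {m : FTrj S} (h : 0 < m.1) (x : X) :
    iota (Sum.inl (m, x)) = Sum.inr (Sum.inl (m.2 ⟨0, h⟩)) := by
  obtain ⟨d, e⟩ := m
  simp [iota, h]

theorem iota_inl_of_eq_zero {m : FTrj S} (h : m.1 = 0) (x : X) :
    iota (Sum.inl (m, x)) = Sum.inl x := by
  obtain ⟨d, e⟩ := m
  subst h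
  simp [iota]

theorem iota_inr (e : DTrj S) : iota (X := X) (Sum.inr e) = Sum.inr e.head := by
  rcases e with _ | ⟨d, e⟩
  · rfl
  · by_cases h : 0 < d <;> simp [iota, DTrj.head, h]

theorem iota_prepend_of_pos {m : FTrj S} (h : 0 < m.1) (k : HS S Y) :
    iota (m.prepend k) = Sum.inr (Sum.inl (m.2 ⟨0, h⟩)) := by
  obtain ⟨d, e⟩ := m
  rcases k with ⟨⟨d', e'⟩, y⟩ | ⟨d', e'⟩ | ⟨d', e'⟩ <;>
    simp [FTrj.prepend, iota, FTrj.concat, FTrj.actD, FTrj.actC, FTrj.actO, h]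

theorem iota_prepend_of_eq_zero {m : FTrj S} (h : m.1 = 0) (k : HS S Y) :
    iota (m.prepend k) = iota k := by
  obtain ⟨d, e⟩ := m
  subst h
  rcases k with ⟨⟨d', e'⟩, y⟩ | ⟨d', e'⟩ | ⟨d', e'⟩ <;>
    simp [FTrj.prepend, iota, FTrj.concat, FTrj.actD, FTrj.actC, FTrj.actO]

end HS

/-- `ι : H_S → (−) ⊎ (S ⊎ {⊥})` is a monad morphism into the exception
monad: `ι ∘ η = inl` and `ι ∘ f⋆ = [ι ∘ f, inr] ∘ ι`. -/
theorem iota_monad_morphism {S X Y : Type} (f : X → HS S Y) :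
    (∀ x : X, HS.iota (HS.eta (S := S) x) = Sum.inl x) ∧
    (∀ p : HS S X,
      HS.iota (HS.bind f p) = Sum.elim (fun x => HS.iota (f x)) Sum.inr (HS.iota p)) := by
  refine ⟨HS.iota_eta, ?_⟩
  rintro (⟨m, x⟩ | e)
  · rw [HS.bind_inl]
    rcases eq_zero_or_pos m.1 with hm | hm
    · rw [HS.iota_prepend_of_eq_zero hm, HS.iota_inl_of_eq_zero hm, Sum.elim_inl]
    · rw [HS.iota_prepend_of_pos hm, HS.iota_inl_of_pos hm, Sum.elim_inr]
  · simp only [HS.bind, HS.iota_inr, Sum.elim_inr]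
end
end
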